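/- Sequential scalar updates equal the batch update: if P ≻ 0 and the measurement noise covariance R = diag(r_1,...,r_m) with each r_i > 0, then applying the Kalman covariance update one scalar measurement row at a time (P ← P - P h_iᵀ (h_i P h_iᵀ + r_i)^{-1} h_i P for i = 1,...,m) yields the same final covariance as the batch update P - PHᵀ(HPHᵀ + R)^{-1}HP, where h_i is the i-th row of H. -/

import Mathlib

/-!
Both updates are the Woodbury identity in disguise (a scalar measurement being a batch of one
row): the batch update equals `(P⁻¹ + Hᵀ R⁻¹ H)⁻¹` and the update by row `h` with noise `c`
equals `(Q⁻¹ + c⁻¹ • h hᵀ)⁻¹`. In this information form the rows' contributions simply add up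
to `Hᵀ R⁻¹ H = ∑ i, (r i)⁻¹ • h_i h_iᵀ`. Positive definiteness keeps every intermediate
covariance invertible.
-/

open Matrix

theorem Matrix.transpose_mul_diagonal_mul {R ι κ : Type*} [CommSemiring R] [Fintype κ]
    [DecidableEq κ] (H : Matrix κ ι R) (d : κ → R) :
    Hᵀ * diagonal d * H = ∑ k, d k • vecMulVec (H k) (H k) := by
  ext i j
  simp [mul_apply, diagonal_apply, vecMulVec_apply, Matrix.sum_apply, mul_comm, mul_left_comm]

section Field

variable {𝕜 ι κ : Type*} [Field 𝕜] [Fintype ι] [Fintype κ] [DecidableEq κ]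

noncomputable def kalmanUpdate (H : Matrix κ ι 𝕜) (R : Matrix κ κ 𝕜) (P : Matrix ι ι 𝕜) :
    Matrix ι ι 𝕜 :=
  P - P * Hᵀ * (H * P * Hᵀ + R)⁻¹ * H * P

noncomputable def kalmanRowUpdate (h : ι → 𝕜) (c : 𝕜) (P : Matrix ι ι 𝕜) : Matrix ι ι 𝕜 :=
  P - (h ⬝ᵥ P *ᵥ h + c)⁻¹ • vecMulVec (P *ᵥ h) (h ᵥ* P)

theorem Matrix.inv_diagonal_of_ne_zero {d : κ → 𝕜} (hd : ∀ k, d k ≠ 0) :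
    (diagonal d)⁻¹ = diagonal d⁻¹ :=
  inv_eq_left_inv <| by
    rw [diagonal_mul_diagonal, ← diagonal_one]
    exact congrArg diagonal (funext fun k => inv_mul_cancel₀ (hd k))

theorem kalmanUpdate_eq_inv_add [DecidableEq ι] {P : Matrix ι ι 𝕜} {R : Matrix κ κ 𝕜}
    (H : Matrix κ ι 𝕜) (hP : IsUnit P) (hR : IsUnit R) (hS : IsUnit (H * P * Hᵀ + R)) :
    kalmanUpdate H R P = (P⁻¹ + Hᵀ * R⁻¹ * H)⁻¹ := by
  have := hP.invertible
  have := hR.invertible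
  have hS' : IsUnit (R⁻¹⁻¹ + H * P⁻¹⁻¹ * Hᵀ) := by
    rwa [inv_inv_of_invertible, inv_inv_of_invertible, add_comm]
  rw [add_mul_mul_inv_eq_sub _ _ _ _ (isUnit_nonsing_inv_iff.mpr hP)
    (isUnit_nonsing_inv_iff.mpr hR) hS', inv_inv_of_invertible, inv_inv_of_invertible, add_comm R]
  rfl

theorem kalmanRowUpdate_eq_kalmanUpdate (h : ι → 𝕜) (c : 𝕜) (P : Matrix ι ι 𝕜) :
    kalmanRowUpdate h c P = kalmanUpdate (replicateRow Unit h) (diagonal fun _ => c) P := by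
  have hS : (replicateRow Unit h * P * (replicateRow Unit h)ᵀ + diagonal fun _ => c)⁻¹ =
      (h ⬝ᵥ P *ᵥ h + c)⁻¹ • 1 := by
    rw [transpose_replicateRow, Matrix.mul_assoc, ← replicateCol_mulVec,
      replicateRow_mul_replicateCol]
    ext
    simp
  rw [kalmanRowUpdate, kalmanUpdate, hS, transpose_replicateRow, ← replicateCol_mulVec,
    Matrix.mul_assoc _ (replicateRow _ _), ← replicateRow_vecMul, vecMulVec_eq Unit]
  simp

end Field

section Real

variable {ι : Type*} [Fintype ι] [DecidableEq ι]

theorem Matrix.PosDef.kalmanUpdate_eq_inv_add {κ : Type*} [Fintype κ] [DecidableEq κ]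
    {P : Matrix ι ι ℝ} {R : Matrix κ κ ℝ} (hP : P.PosDef) (hR : R.PosDef) (H : Matrix κ ι ℝ) :
    kalmanUpdate H R P = (P⁻¹ + Hᵀ * R⁻¹ * H)⁻¹ := by
  have hS : (H * P * Hᵀ + R).PosDef := by
    simpa using PosDef.posSemidef_add (hP.posSemidef.mul_mul_conjTranspose_same H) hR
  exact _root_.kalmanUpdate_eq_inv_add H hP.isUnit hR.isUnit hS.isUnit

theorem Matrix.PosDef.kalmanRowUpdate_eq_inv_add {Q : Matrix ι ι ℝ} (hQ : Q.PosDef)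
    (h : ι → ℝ) {c : ℝ} (hc : 0 < c) :
    kalmanRowUpdate h c Q = (Q⁻¹ + c⁻¹ • vecMulVec h h)⁻¹ := by
  rw [kalmanRowUpdate_eq_kalmanUpdate,
    hQ.kalmanUpdate_eq_inv_add (posDef_diagonal_iff.mpr fun _ => hc),
    inv_diagonal_of_ne_zero fun _ => hc.ne', transpose_mul_diagonal_mul, Fintype.sum_unique]
  rfl

theorem Matrix.PosDef.inv_add_smul_vecMulVec {Q : Matrix ι ι ℝ} (hQ : Q.PosDef)
    (h : ι → ℝ) {c : ℝ} (hc : 0 < c) : (Q⁻¹ + c⁻¹ • vecMulVec h h).PosDef :=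
  hQ.inv.add_posSemidef <| by
    simpa using (posSemidef_vecMulVec_self_star h).smul (inv_nonneg.mpr hc.le)

theorem Matrix.PosDef.foldl_kalmanRowUpdate {κ : Type*} (H : Matrix κ ι ℝ) {r : κ → ℝ}
    (hr : ∀ k, 0 < r k) (l : List κ) {Q : Matrix ι ι ℝ} (hQ : Q.PosDef) :
    l.foldl (fun Q k => kalmanRowUpdate (H k) (r k) Q) Q =
      (Q⁻¹ + (l.map fun k => (r k)⁻¹ • vecMulVec (H k) (H k)).sum)⁻¹ := by
  induction l generalizing Q with
  | nil => simp [nonsing_inv_nonsing_inv _ ((isUnit_iff_isUnit_det _).mp hQ.isUnit)]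
  | cons k l ih =>
    have hA := hQ.inv_add_smul_vecMulVec (H k) (hr k)
    rw [List.foldl_cons, hQ.kalmanRowUpdate_eq_inv_add _ (hr k), ih hA.inv,
      nonsing_inv_nonsing_inv _ ((isUnit_iff_isUnit_det _).mp hA.isUnit), List.map_cons,
      List.sum_cons, add_assoc]

end Real

/-- with diagonal measurement noise, applying the Kalman covariance update
one scalar measurement row at a time gives the same result as the batch update. -/
theorem sequential_scalar_updates_eq_batch {n m : ℕ}
    (P : Matrix (Fin n) (Fin n) ℝ) (hP : P.PosDef)
    (H : Matrix (Fin m) (Fin n) ℝ) (r : Fin m → ℝ) (hr : ∀ i, 0 < r i) :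
    (List.finRange m).foldl
        (fun Q i =>
          Q - (H i ⬝ᵥ Q.mulVec (H i) + r i)⁻¹ •
            Matrix.vecMulVec (Q.mulVec (H i)) (H i ᵥ* Q))
        P
      = P - P * Hᵀ * (H * P * Hᵀ + Matrix.diagonal r)⁻¹ * H * P := by
  change (List.finRange m).foldl (fun Q i => kalmanRowUpdate (H i) (r i) Q) P =
    kalmanUpdate H (diagonal r) P
  rw [hP.foldl_kalmanRowUpdate H hr, hP.kalmanUpdate_eq_inv_add (posDef_diagonal_iff.mpr hr),
    inv_diagonal_of_ne_zero fun i => (hr i).ne', transpose_mul_diagonal_mul, Fin.sum_univ_def]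
  rfl
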